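/- The quantum Lipschitz constant of a local Hamiltonian is upper bounded by twice the maximum, over the qudits, of the operator norm of the sum of the Hamiltonian terms acting on that qudit: if H = Σ_{I ⊆ [n]} H_I where each H_I ∈ O_n acts only on the qudits in I (i.e., H_I is of the form K_I ⊗ identity on the complement of I), then ‖H‖_L ≤ 2 max_{i ∈ [n]} ‖ Σ_{I ⊆ [n] : i ∈ I} H_I ‖_∞. -/

import Mathlib

open scoped BigOperators
open scoped Classical
open scoped ComplexOrder

noncomputable section

namespace QW1

/-- Configurations of `n` qudits of local dimension `d`:
the index set of the canonical basis of `(ℂ^d)^{⊗ n}`. -/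
abbrev Cfg (d n : ℕ) : Type := Fin n → Fin d

/-- Linear operators on the Hilbert space of `n` qudits, represented as matrices
in the canonical basis. -/
abbrev Mat (d n : ℕ) : Type := Matrix (Cfg d n) (Cfg d n) ℂ

/-- The trace norm `‖A‖₁ = Tr √(Aᴴ A)`. -/
noncomputable def traceNorm {ι : Type} [Fintype ι] [DecidableEq ι] (A : Matrix ι ι ℂ) : ℝ :=
  (((((Matrix.posSemidef_conjTranspose_mul_self A).1.eigenvectorUnitary : Matrix ι ι ℂ) *
    Matrix.diagonal (fun i => ((Real.sqrt
      ((Matrix.posSemidef_conjTranspose_mul_self A).1.eigenvalues i) : ℝ) : ℂ)) *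
    (star ((Matrix.posSemidef_conjTranspose_mul_self A).1.eigenvectorUnitary : Matrix ι ι ℂ)))).trace).re

/-- The operator norm `‖A‖_∞`. -/
noncomputable def opNorm {ι : Type} [Fintype ι] [DecidableEq ι] (A : Matrix ι ι ℂ) : ℝ :=
  ‖Matrix.toEuclideanCLM (𝕜 := ℂ) A‖

/-- Quantum states: positive semidefinite operators with unit trace. -/
def IsState {ι : Type} [Fintype ι] (ρ : Matrix ι ι ℂ) : Prop :=
  ρ.PosSemidef ∧ ρ.trace = 1

/-- Insert the value `s` at position `i` into a configuration `a` of the remaining qudits. -/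
def ins {d n : ℕ} (i : Fin n) (a : {j : Fin n // j ≠ i} → Fin d) (s : Fin d) : Cfg d n :=
  fun j => if h : j = i then s else a ⟨j, h⟩

/-- The partial trace over the `i`-th qudit. -/
noncomputable def ptrace {d n : ℕ} (i : Fin n) (X : Mat d n) :
    Matrix ({j : Fin n // j ≠ i} → Fin d) ({j : Fin n // j ≠ i} → Fin d) ℂ :=
  fun a b => ∑ s : Fin d, X (ins i a s) (ins i b s)

/-- The marginal of `ρ` on the `i`-th qudit (partial trace over all the other qudits). -/
noncomputable def marginal {d n : ℕ} (i : Fin n) (ρ : Mat d n) :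
    Matrix (Fin d) (Fin d) ℂ :=
  fun s t => ∑ a : ({j : Fin n // j ≠ i} → Fin d), ρ (ins i a s) (ins i a t)

/-- Combine a configuration `s` of the qudits in `I` with a configuration `a` of the rest. -/
def insSet {d n : ℕ} (I : Finset (Fin n)) (a : {j : Fin n // j ∉ I} → Fin d)
    (s : {j : Fin n // j ∈ I} → Fin d) : Cfg d n :=
  fun j => if h : j ∈ I then s ⟨j, h⟩ else a ⟨j, h⟩

/-- The partial trace over the qudits in `I`. -/
noncomputable def ptraceSet {d n : ℕ} (I : Finset (Fin n)) (X : Mat d n) :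
    Matrix ({j : Fin n // j ∉ I} → Fin d) ({j : Fin n // j ∉ I} → Fin d) ℂ :=
  fun a b => ∑ s : ({j : Fin n // j ∈ I} → Fin d), X (insSet I a s) (insSet I b s)

/-- The set of values `(1/2) ∑ i ‖X⁽ⁱ⁾‖₁` over all decompositions `X = ∑ i X⁽ⁱ⁾` with
`X⁽ⁱ⁾` self-adjoint and `Tr_i X⁽ⁱ⁾ = 0`. -/
def W1Set {d n : ℕ} (X : Mat d n) : Set ℝ :=
  { r | ∃ Y : Fin n → Mat d n, (∀ i, (Y i).IsHermitian) ∧ (∀ i, ptrace i (Y i) = 0) ∧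
      X = ∑ i, Y i ∧ r = (1 / 2) * ∑ i, traceNorm (Y i) }

/-- The quantum `W₁` norm. -/
noncomputable def W1 {d n : ℕ} (X : Mat d n) : ℝ := sInf (W1Set X)

/-- The quantum Lipschitz constant: the dual norm of the quantum `W₁` norm. -/
noncomputable def lipschitz {d n : ℕ} (H : Mat d n) : ℝ :=
  sSup { r | ∃ X : Mat d n, X.IsHermitian ∧ X.trace = 0 ∧ W1 X ≤ 1 ∧
    r = ((H * X).trace).re }

/-- Extension `Φ ⊗ id_R` of a map on matrices. -/
def extendMap {A B R : Type} [Fintype A] [Fintype B] [Fintype R]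
    (Φ : Matrix A A ℂ → Matrix B B ℂ) (M : Matrix (A × R) (A × R) ℂ) :
    Matrix (B × R) (B × R) ℂ :=
  fun p q => Φ (fun a a' => M (a, p.2) (a', q.2)) p.1 q.1

/-- Quantum channels: completely positive trace-preserving linear maps. -/
def IsCPTP {A B : Type} [Fintype A] [Fintype B]
    (Φ : Matrix A A ℂ →ₗ[ℂ] Matrix B B ℂ) : Prop :=
  (∀ (k : ℕ) (M : Matrix (A × Fin k) (A × Fin k) ℂ), M.PosSemidef →
    (extendMap (fun N => Φ N) M).PosSemidef) ∧
  ∀ M, (Φ M).trace = M.trace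

/-- Action `φ_i ⊗ id` of a single-qudit map `φ` on the `i`-th qudit of `n` qudits. -/
def applyAt {d n : ℕ} (i : Fin n) (φ : Matrix (Fin d) (Fin d) ℂ → Matrix (Fin d) (Fin d) ℂ)
    (X : Mat d n) : Mat d n :=
  fun a b => φ (fun s t => X (Function.update a i s) (Function.update b i t)) (a i) (b i)

/-- Action `φ_I ⊗ id` of a map `φ` on the qudits in `I`. -/
def applyOn {d n : ℕ} (I : Finset (Fin n))
    (φ : Matrix ({j : Fin n // j ∈ I} → Fin d) ({j : Fin n // j ∈ I} → Fin d) ℂ →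
         Matrix ({j : Fin n // j ∈ I} → Fin d) ({j : Fin n // j ∈ I} → Fin d) ℂ)
    (X : Mat d n) : Mat d n :=
  fun a b =>
    φ (fun s t => X (insSet I (fun j => a j) s) (insSet I (fun j => b j) t))
      (fun j => a j) (fun j => b j)

/-- The operator obtained from `X` by permuting the tensor factors according to `π`. -/
def permuteMat {d n : ℕ} (π : Equiv.Perm (Fin n)) (X : Mat d n) : Mat d n :=
  fun a b => X (a ∘ π) (b ∘ π)

/-- Tensor product of an operator on the first `m` qudits with one on the last `n` qudits. -/
def tensorMN {d m n : ℕ} (A : Mat d m) (B : Mat d n) : Mat d (m + n) :=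
  fun a b =>
    A (fun i => a (Fin.castAdd n i)) (fun i => b (Fin.castAdd n i)) *
    B (fun j => a (Fin.natAdd m j)) (fun j => b (Fin.natAdd m j))

/-- Partial trace of an operator on `m + n` qudits over the last `n` qudits. -/
noncomputable def ptraceLast {d m n : ℕ} (X : Mat d (m + n)) : Mat d m :=
  fun a b => ∑ k : Cfg d n, X (Fin.append a k) (Fin.append b k)

/-- Partial trace of an operator on `m + n` qudits over the first `m` qudits. -/
noncomputable def ptraceFirst {d m n : ℕ} (X : Mat d (m + n)) : Mat d n :=
  fun a b => ∑ k : Cfg d m, X (Fin.append k a) (Fin.append k b)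

/-- `n`-fold tensor product `σ₁ ⊗ ⋯ ⊗ σₙ` of single-qudit operators. -/
def tensorAll {d n : ℕ} (σs : Fin n → Matrix (Fin d) (Fin d) ℂ) : Mat d n :=
  fun a b => ∏ i, σs i (a i) (b i)

/-- `I_d^{(i)} ⊗ K`: the identity on the `i`-th qudit tensored with an operator `K`
on the remaining qudits. -/
def idTensorAt {d n : ℕ} (i : Fin n)
    (K : Matrix ({j : Fin n // j ≠ i} → Fin d) ({j : Fin n // j ≠ i} → Fin d) ℂ) :
    Mat d n :=
  fun a b => if a i = b i then K (fun j => a j) (fun j => b j) else 0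

/-- `K ⊗ identity`: an operator acting only on the qudits in `I`. -/
def embedOn {d n : ℕ} (I : Finset (Fin n))
    (K : Matrix ({j : Fin n // j ∈ I} → Fin d) ({j : Fin n // j ∈ I} → Fin d) ℂ) :
    Mat d n :=
  fun a b => if (∀ j, j ∉ I → a j = b j) then K (fun j => a j) (fun j => b j) else 0

/-- The `n`-th tensor power `φ^{⊗n}` of a single-qudit linear map `φ`. -/
noncomputable def tensorPowMap {d n : ℕ}
    (φ : Matrix (Fin d) (Fin d) ℂ → Matrix (Fin d) (Fin d) ℂ) (X : Mat d n) : Mat d n :=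
  fun a b => ∑ s : Cfg d n, ∑ t : Cfg d n,
    X s t * ∏ j, φ (Matrix.single (s j) (t j) 1) (a j) (b j)

/-- The `1 → 1` norm of a map on single-qudit operators. -/
noncomputable def norm1to1 {d : ℕ}
    (F : Matrix (Fin d) (Fin d) ℂ → Matrix (Fin d) (Fin d) ℂ) : ℝ :=
  sSup { r | ∃ ρ : Matrix (Fin d) (Fin d) ℂ, IsState ρ ∧ r = traceNorm (F ρ) }

/-- The diamond norm of a map on single-qudit operators. -/
noncomputable def diamondNorm {d : ℕ}
    (F : Matrix (Fin d) (Fin d) ℂ → Matrix (Fin d) (Fin d) ℂ) : ℝ :=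
  sSup { r | ∃ ρ : Matrix (Fin d × Fin d) (Fin d × Fin d) ℂ, IsState ρ ∧
    r = traceNorm (extendMap F ρ) }

/-- The contraction coefficient (`W₁ → W₁` norm) of a map on `n`-qudit operators. -/
noncomputable def W1toW1 {d n : ℕ} (Φ : Mat d n → Mat d n) : ℝ :=
  sSup { r | ∃ X : Mat d n, X.IsHermitian ∧ X.trace = 0 ∧ W1 X ≤ 1 ∧ r = W1 (Φ X) }

/-- The von Neumann entropy `S(ρ) = -Tr[ρ ln ρ]` (natural logarithm). -/
noncomputable def vnEntropy {ι : Type} [Fintype ι] [DecidableEq ι] (ρ : Matrix ι ι ℂ) : ℝ :=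
  if h : ρ.IsHermitian then -∑ i, h.eigenvalues i * Real.log (h.eigenvalues i) else 0

/-- The logarithm of a self-adjoint matrix, via the spectral decomposition. -/
noncomputable def matLog {ι : Type} [Fintype ι] [DecidableEq ι] (ρ : Matrix ι ι ℂ) :
    Matrix ι ι ℂ :=
  if h : ρ.IsHermitian then
    (h.eigenvectorUnitary : Matrix ι ι ℂ) *
      Matrix.diagonal (fun i => (Real.log (h.eigenvalues i) : ℂ)) *
      (star (h.eigenvectorUnitary : Matrix ι ι ℂ))
  else 0

/-- The quantum relative entropy `S(ρ‖σ) = Tr[ρ (ln ρ - ln σ)]`. -/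
noncomputable def relEntropy {ι : Type} [Fintype ι] [DecidableEq ι]
    (ρ σ : Matrix ι ι ℂ) : ℝ :=
  ((ρ * (matLog ρ - matLog σ)).trace).re

/-- The Hamming distance between two configurations. -/
def hamming {d n : ℕ} (x y : Cfg d n) : ℕ :=
  (Finset.univ.filter (fun i => x i ≠ y i)).card

/-- Probability distributions on a finite set. -/
def IsProb {α : Type} [Fintype α] (p : α → ℝ) : Prop :=
  (∀ x, 0 ≤ p x) ∧ ∑ x, p x = 1

/-- Couplings of two probability distributions. -/
def IsCoupling {α : Type} [Fintype α] (π : α × α → ℝ) (p q : α → ℝ) : Prop :=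
  IsProb π ∧ (∀ x, ∑ y, π (x, y) = p x) ∧ (∀ y, ∑ x, π (x, y) = q y)

/-- The classical Wasserstein distance of order 1 with respect to the Hamming distance. -/
noncomputable def classicalW1 {d n : ℕ} (p q : Cfg d n → ℝ) : ℝ :=
  sInf { c | ∃ π : Cfg d n × Cfg d n → ℝ, IsCoupling π p q ∧
    c = ∑ x : Cfg d n, ∑ y : Cfg d n, (hamming x y : ℝ) * π (x, y) }

/-- The Lipschitz constant of a function on `[d]^n` with respect to the Hamming distance. -/
noncomputable def classicalLip {d n : ℕ} (f : Cfg d n → ℝ) : ℝ :=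
  sSup { r | ∃ x y : Cfg d n, x ≠ y ∧ r = |f x - f y| / (hamming x y : ℝ) }

/-!
Decompose a traceless `X` as `X = ∑ᵢ X⁽ⁱ⁾` with `Trᵢ X⁽ⁱ⁾ = 0`. A term `H_I` with `i ∉ I` has the
form `I ⊗ K` on qudit `i`, so `Tr[H_I X⁽ⁱ⁾] = Tr[K Trᵢ X⁽ⁱ⁾] = 0`. Hence `Tr[H X] = ∑ᵢ Tr[Hᵢ X⁽ⁱ⁾]`,
where `Hᵢ` collects the terms acting on qudit `i`, and Hölder's inequality bounds this by
`maxᵢ ‖Hᵢ‖_∞ ∑ᵢ ‖X⁽ⁱ⁾‖₁`. Taking the infimum over decompositions gives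
`Tr[H X] ≤ 2 maxᵢ ‖Hᵢ‖_∞ ‖X‖_{W₁}`. The infimum is over a nonempty set: writing `R_k X` for `X` with
its first `k` qudits traced out and reset to a fixed basis state, `X = ∑ₖ (R_k X - R_{k+1} X)`
telescopes because `R_n X = Tr[X] · |z⟩⟨z| = 0`.
-/

open scoped Matrix

section Holder

variable {ι : Type} [Fintype ι] [DecidableEq ι]

theorem traceNorm_eq_sum_abs_eigenvalues {Y : Matrix ι ι ℂ} (hY : Y.IsHermitian) :
    traceNorm Y = ∑ i, |hY.eigenvalues i| := by
  have hsqrt : traceNorm Y = (cfc Real.sqrt (Yᴴ * Y)).trace.re := by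
    rw [Matrix.IsHermitian.cfc_eq (Matrix.posSemidef_conjTranspose_mul_self Y).1]; rfl
  have habs : cfc Real.sqrt (Yᴴ * Y) = cfc (fun x : ℝ => |x|) Y := by
    rw [hY.eq, ← pow_two, ← cfc_pow_id (R := ℝ) Y 2 hY.isSelfAdjoint,
      ← cfc_comp Real.sqrt (· ^ 2 : ℝ → ℝ) Y]
    exact cfc_congr fun x _ => Real.sqrt_sq_eq_abs x
  rw [hsqrt, habs, Matrix.IsHermitian.cfc_eq hY, Matrix.IsHermitian.cfc,
    Unitary.conjStarAlgAut_apply, Matrix.trace_mul_cycle, Unitary.coe_star_mul_self,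
    Matrix.one_mul, Matrix.trace_diagonal]
  simp

theorem traceNorm_nonneg {Y : Matrix ι ι ℂ} (hY : Y.IsHermitian) : 0 ≤ traceNorm Y := by
  rw [traceNorm_eq_sum_abs_eigenvalues hY]
  exact Finset.sum_nonneg fun i _ => abs_nonneg _

theorem norm_conj_apply_self_le_opNorm (M : Matrix ι ι ℂ) {U : Matrix ι ι ℂ}
    (hU : star U * U = 1) (i : ι) : ‖(star U * M * U) i i‖ ≤ opNorm M := by
  set u : EuclideanSpace ℂ ι := WithLp.toLp 2 (fun a => U a i)
  set T := Matrix.toEuclideanCLM (𝕜 := ℂ) M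
  have hinner : inner ℂ u (T u) = (star U * M * U) i i := by
    rw [Matrix.toEuclideanCLM_toLp, EuclideanSpace.inner_eq_star_dotProduct]
    simp only [dotProduct, Matrix.mulVec, Matrix.mul_apply, Pi.star_apply,
      RCLike.star_def, Matrix.star_apply, Finset.sum_mul]
    rw [Finset.sum_comm]
    exact Finset.sum_congr rfl fun a _ => Finset.sum_congr rfl fun b _ => by ring
  have hu : ‖u‖ = 1 := by
    have hself : inner ℂ u u = 1 := by
      have := congrFun (congrFun hU i) i
      simp only [Matrix.mul_apply, Matrix.one_apply_eq] at this
      simp only [EuclideanSpace.inner_eq_star_dotProduct]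
      simpa [dotProduct, mul_comm] using this
    have hsq : ‖u‖ ^ 2 = 1 := by
      rw [← inner_self_eq_norm_sq (𝕜 := ℂ) u, hself]; simp
    nlinarith [norm_nonneg u]
  calc ‖(star U * M * U) i i‖ = ‖inner ℂ u (T u)‖ := by rw [hinner]
    _ ≤ ‖u‖ * (‖T‖ * ‖u‖) := (norm_inner_le_norm _ _).trans (by gcongr; exact T.le_opNorm u)
    _ = opNorm M := by rw [hu, opNorm]; ring

theorem re_trace_mul_le_opNorm_mul_traceNorm (M : Matrix ι ι ℂ) {Y : Matrix ι ι ℂ}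
    (hY : Y.IsHermitian) : (M * Y).trace.re ≤ opNorm M * traceNorm Y := by
  set U : Matrix ι ι ℂ := (hY.eigenvectorUnitary : Matrix ι ι ℂ)
  have hU : star U * U = 1 := Matrix.mem_unitaryGroup_iff'.mp hY.eigenvectorUnitary.2
  have htr : (M * Y).trace = ∑ i, (star U * M * U) i i * (hY.eigenvalues i : ℂ) := by
    conv_lhs => rw [hY.spectral_theorem, Unitary.conjStarAlgAut_apply]
    rw [← Matrix.mul_assoc, ← Matrix.mul_assoc, Matrix.trace_mul_comm,
      ← Matrix.mul_assoc, ← Matrix.mul_assoc, Matrix.trace]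
    simp [U, Matrix.mul_diagonal]
  rw [htr, Complex.re_sum, traceNorm_eq_sum_abs_eigenvalues hY, Finset.mul_sum]
  refine Finset.sum_le_sum fun i _ => ?_
  calc ((star U * M * U) i i * (hY.eigenvalues i : ℂ)).re
      = ((star U * M * U) i i).re * hY.eigenvalues i := by simp [Complex.mul_re]
    _ ≤ ‖(star U * M * U) i i‖ * |hY.eigenvalues i| := by
        refine (le_abs_self _).trans ?_
        rw [abs_mul]
        gcongr
        exact Complex.abs_re_le_norm _
    _ ≤ opNorm M * |hY.eigenvalues i| := by
        gcongr; exact norm_conj_apply_self_le_opNorm M hU i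

end Holder

section Locality

variable {d n : ℕ}

@[simp]
theorem ins_apply_self (i : Fin n) (α : {j : Fin n // j ≠ i} → Fin d) (s : Fin d) :
    ins i α s i = s := by simp [ins]

@[simp]
theorem ins_apply_ne {i j : Fin n} (α : {j : Fin n // j ≠ i} → Fin d) (s : Fin d)
    (h : j ≠ i) : ins i α s j = α ⟨j, h⟩ := by simp [ins, h]

theorem restrict_ins (i : Fin n) (α : {j : Fin n // j ≠ i} → Fin d) (s : Fin d) :
    (fun j : {j : Fin n // j ≠ i} => ins i α s j) = α := by
  funext j; exact ins_apply_ne α s j.2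

theorem ins_restrict (i : Fin n) (a : Cfg d n) : ins i (fun j => a j) (a i) = a := by
  funext j
  by_cases h : j = i
  · subst h; simp
  · simp [h]

def insEquiv (i : Fin n) : Fin d × ({j : Fin n // j ≠ i} → Fin d) ≃ Cfg d n where
  toFun p := ins i p.2 p.1
  invFun a := (a i, fun j => a j)
  left_inv p := by simp [restrict_ins]
  right_inv a := ins_restrict i a

theorem idTensorAt_ins (i : Fin n) (K : Matrix ({j : Fin n // j ≠ i} → Fin d)
    ({j : Fin n // j ≠ i} → Fin d) ℂ) (α β : {j : Fin n // j ≠ i} → Fin d) (s t : Fin d) :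
    idTensorAt i K (ins i α s) (ins i β t) = if s = t then K α β else 0 := by
  simp [idTensorAt, restrict_ins]

theorem trace_idTensorAt_mul (i : Fin n) (K : Matrix ({j : Fin n // j ≠ i} → Fin d)
    ({j : Fin n // j ≠ i} → Fin d) ℂ) (Y : Mat d n) :
    (idTensorAt i K * Y).trace = (K * ptrace i Y).trace := by
  simp only [Matrix.trace, Matrix.diag, Matrix.mul_apply, ptrace, Finset.mul_sum]
  rw [← (insEquiv i).sum_comp]
  simp only [← (insEquiv i).sum_comp (fun b => idTensorAt i K _ b * Y b _)]
  simp only [insEquiv, Equiv.coe_fn_mk, Fintype.sum_prod_type, idTensorAt_ins, ite_mul,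
    zero_mul]
  rw [Finset.sum_comm]
  refine Finset.sum_congr rfl fun α _ => ?_
  simp only [Finset.sum_comm (γ := Fin d), Finset.sum_ite_eq, Finset.mem_univ, if_true]

theorem embedOn_ins {I : Finset (Fin n)} {i : Fin n} (hi : i ∉ I)
    (K : Matrix ({j : Fin n // j ∈ I} → Fin d) ({j : Fin n // j ∈ I} → Fin d) ℂ)
    (α β : {j : Fin n // j ≠ i} → Fin d) (s : Fin d) :
    embedOn I K (ins i α s) (ins i β s) =
      if ∀ j : {j : Fin n // j ≠ i}, (j : Fin n) ∉ I → α j = β j then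
        K (fun j => α ⟨j, ne_of_mem_of_not_mem j.2 hi⟩)
          (fun j => β ⟨j, ne_of_mem_of_not_mem j.2 hi⟩)
      else 0 := by
  have hcond : (∀ j, j ∉ I → ins i α s j = ins i β s j) ↔
      ∀ j : {j : Fin n // j ≠ i}, (j : Fin n) ∉ I → α j = β j := by
    refine ⟨fun h j hj => by simpa [j.2] using h j hj, fun h j hj => ?_⟩
    by_cases hji : j = i
    · subst hji; simp
    · simpa [hji] using h ⟨j, hji⟩ hj
  have hrestr : ∀ γ : {j : Fin n // j ≠ i} → Fin d, (fun j : {j : Fin n // j ∈ I} => ins i γ s j) =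
      fun j : {j : Fin n // j ∈ I} => γ ⟨j, ne_of_mem_of_not_mem j.2 hi⟩ :=
    fun γ => funext fun j => ins_apply_ne γ s _
  simp only [embedOn, hcond, hrestr]

theorem embedOn_eq_idTensorAt {I : Finset (Fin n)} {i : Fin n} (hi : i ∉ I)
    (K : Matrix ({j : Fin n // j ∈ I} → Fin d) ({j : Fin n // j ∈ I} → Fin d) ℂ) (s : Fin d) :
    embedOn I K = idTensorAt i (Matrix.of fun α β => embedOn I K (ins i α s) (ins i β s)) := by
  ext a b
  by_cases hab : a i = b i
  · rw [← ins_restrict i a, ← ins_restrict i b, idTensorAt_ins, hab, if_pos rfl, Matrix.of_apply,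
      embedOn_ins hi, embedOn_ins hi]
  · simp only [idTensorAt, hab, if_false, embedOn]
    exact if_neg fun h => hab (h i hi)

theorem trace_embedOn_mul_eq_zero [NeZero d] {I : Finset (Fin n)} {i : Fin n} (hi : i ∉ I)
    (K : Matrix ({j : Fin n // j ∈ I} → Fin d) ({j : Fin n // j ∈ I} → Fin d) ℂ)
    {Y : Mat d n} (hY : ptrace i Y = 0) : (embedOn I K * Y).trace = 0 := by
  rw [embedOn_eq_idTensorAt hi K 0, trace_idTensorAt_mul, hY, Matrix.mul_zero, Matrix.trace_zero]

end Locality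

section Decomposition

variable {d n : ℕ}

def ptraceLinearMap (i : Fin n) :
    Mat d n →ₗ[ℂ] Matrix ({j : Fin n // j ≠ i} → Fin d) ({j : Fin n // j ≠ i} → Fin d) ℂ where
  toFun := ptrace i
  map_add' X Y := by ext; simp [ptrace, Finset.sum_add_distrib]
  map_smul' c X := by ext; simp [ptrace, Finset.mul_sum]

theorem ptrace_sum {κ : Type} (s : Finset κ) (i : Fin n) (X : κ → Mat d n) :
    ptrace i (∑ k ∈ s, X k) = ∑ k ∈ s, ptrace i (X k) :=
  map_sum (ptraceLinearMap i) X s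

theorem ptrace_sub (i : Fin n) (X Y : Mat d n) : ptrace i (X - Y) = ptrace i X - ptrace i Y :=
  map_sub (ptraceLinearMap i) X Y

theorem ptrace_smul (i : Fin n) (c : ℂ) (X : Mat d n) : ptrace i (c • X) = c • ptrace i X :=
  map_smul (ptraceLinearMap i) c X

theorem ptrace_add (i : Fin n) (X Y : Mat d n) : ptrace i (X + Y) = ptrace i X + ptrace i Y :=
  map_add (ptraceLinearMap i) X Y

theorem ptrace_conjTranspose (i : Fin n) (X : Mat d n) : ptrace i Xᴴ = (ptrace i X)ᴴ := by
  ext α β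
  simp [ptrace, Matrix.conjTranspose_apply, star_sum]

theorem eq_ins_iff {i : Fin n} {α : {j : Fin n // j ≠ i} → Fin d} {s : Fin d} {a : Cfg d n} :
    a = ins i α s ↔ a i = s ∧ (fun j : {j : Fin n // j ≠ i} => a j) = α := by
  constructor
  · rintro rfl
    exact ⟨ins_apply_self i α s, restrict_ins i α s⟩
  · rintro ⟨rfl, rfl⟩
    exact (ins_restrict i a).symm

theorem ptrace_single (i : Fin n) (a b : Cfg d n) (c : ℂ) :
    ptrace i (Matrix.single a b c) =
      if a i = b i then
        Matrix.single (fun j : {j : Fin n // j ≠ i} => a j) (fun j : {j : Fin n // j ≠ i} => b j) c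
      else 0 := by
  ext α β
  simp only [ptrace, Matrix.single_apply, eq_ins_iff]
  rw [Finset.sum_eq_single (a i) (fun s _ hs => if_neg fun h => hs h.1.1.symm) (by simp)]
  by_cases h : a i = b i
  · simp [h, Matrix.single_apply]
  · simp [h, Ne.symm h]

def overwriteBelow (z : Cfg d n) (k : ℕ) (a : Cfg d n) : Cfg d n :=
  fun j => if (j : ℕ) < k then z j else a j

/-- `Tr_{<k} X ⊗ |z_{<k}⟩⟨z_{<k}|`. -/
def resetBelow (z : Cfg d n) (k : ℕ) (X : Mat d n) : Mat d n :=
  ∑ a, ∑ b, Matrix.single (overwriteBelow z k a) (overwriteBelow z k b)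
    (if ∀ j : Fin n, (j : ℕ) < k → a j = b j then X a b else 0)

theorem resetBelow_zero (z : Cfg d n) (X : Mat d n) : resetBelow z 0 X = X := by
  have hz : ∀ a, overwriteBelow z 0 a = a := fun a => funext fun j => if_neg j.1.not_lt_zero
  simpa [resetBelow, hz] using (Matrix.matrix_eq_sum_single X).symm

theorem resetBelow_eq_zero (z : Cfg d n) {X : Mat d n} (hX : X.trace = 0) :
    resetBelow z n X = 0 := by
  have hz : ∀ a, overwriteBelow z n a = z := fun a => funext fun j => if_pos j.2
  have hdiag : ∀ a b : Cfg d n, (∀ j : Fin n, (j : ℕ) < n → a j = b j) ↔ a = b :=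
    fun a b => ⟨fun h => funext fun j => h j j.2, fun h j _ => h ▸ rfl⟩
  simp only [resetBelow, hz, hdiag, ← Matrix.singleAddMonoidHom_apply, ← map_sum,
    Finset.sum_ite_eq, Finset.mem_univ, if_true]
  exact (congrArg _ hX).trans (map_zero _)

theorem ptrace_resetBelow_sub_resetBelow (z : Cfg d n) (i : Fin n) (X : Mat d n) :
    ptrace i (resetBelow z i X - resetBelow z (i + 1) X) = 0 := by
  have hat : ∀ a, overwriteBelow z i a i = a i := fun a => if_neg (lt_irrefl _)
  have hat' : ∀ a, overwriteBelow z (i + 1) a i = z i := fun a => if_pos (Nat.lt_succ_self _)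
  have hoff : ∀ a, (fun j : {j : Fin n // j ≠ i} => overwriteBelow z i a j) =
      fun j : {j : Fin n // j ≠ i} => overwriteBelow z (i + 1) a j := by
    intro a
    funext j
    have : (j : ℕ) ≠ i := fun h => j.2 (Fin.ext h)
    simp only [overwriteBelow]
    congr 1
    exact propext (by omega)
  have hcond : ∀ a b : Cfg d n, (∀ j : Fin n, (j : ℕ) < i + 1 → a j = b j) ↔
      (∀ j : Fin n, (j : ℕ) < i → a j = b j) ∧ a i = b i := by
    refine fun a b => ⟨fun h => ⟨fun j hj => h j (by omega), h i (by omega)⟩, ?_⟩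
    rintro ⟨h, hi⟩ j hj
    rcases Nat.lt_succ_iff_lt_or_eq.mp hj with hj | hj
    · exact h j hj
    · exact Fin.ext hj ▸ hi
  rw [ptrace_sub, sub_eq_zero]
  simp only [resetBelow, ptrace_sum, ptrace_single, hat, hat', hoff, hcond, if_true]
  refine Finset.sum_congr rfl fun a _ => Finset.sum_congr rfl fun b _ => ?_
  by_cases hab : a i = b i <;> simp [hab]

theorem W1Set_nonempty_of_eq_sum {X : Mat d n} (hX : X.IsHermitian) (Y : Fin n → Mat d n)
    (hY : ∀ i, ptrace i (Y i) = 0) (hsum : X = ∑ i, Y i) : (W1Set X).Nonempty := by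
  have hhalf : IsSelfAdjoint (2⁻¹ : ℂ) := by simp [isSelfAdjoint_iff]
  refine ⟨_, fun i => (2⁻¹ : ℂ) • (Y i + (Y i)ᴴ),
    fun i => (Matrix.isHermitian_add_transpose_self _).smul hhalf, fun i => ?_, ?_, rfl⟩
  · rw [ptrace_smul, ptrace_add, ptrace_conjTranspose, hY i, Matrix.conjTranspose_zero, add_zero,
      smul_zero]
  · rw [← Finset.smul_sum, Finset.sum_add_distrib, ← Matrix.conjTranspose_sum, ← hsum, hX.eq,
      ← two_smul ℂ X, smul_smul, inv_mul_cancel₀ two_ne_zero, one_smul]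

theorem W1Set_nonempty [NeZero d] {X : Mat d n} (hX : X.IsHermitian) (htr : X.trace = 0) :
    (W1Set X).Nonempty := by
  refine W1Set_nonempty_of_eq_sum hX (fun i => resetBelow 0 i X - resetBelow 0 (i + 1) X)
    (ptrace_resetBelow_sub_resetBelow 0 · X) ?_
  rw [Fin.sum_univ_eq_sum_range (fun k => resetBelow 0 k X - resetBelow 0 (k + 1) X),
    Finset.sum_range_sub', resetBelow_zero, resetBelow_eq_zero 0 htr, sub_zero]

end Decomposition

section LocalHamiltonian

variable {d n : ℕ} [NeZero d] {Hs : Finset (Fin n) → Mat d n}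

theorem trace_sum_mul_eq_trace_sum_filter_mem (hloc : ∀ I, ∃ K, Hs I = embedOn I K)
    {i : Fin n} {Y : Mat d n} (hY : ptrace i Y = 0) :
    ((∑ I, Hs I) * Y).trace = ((∑ I ∈ Finset.univ.filter (fun I => i ∈ I), Hs I) * Y).trace := by
  have hfar : ∑ I ∈ Finset.univ.filter (fun I => i ∉ I), (Hs I * Y).trace = 0 := by
    refine Finset.sum_eq_zero fun I hI => ?_
    obtain ⟨K, hK⟩ := hloc I
    rw [hK]
    exact trace_embedOn_mul_eq_zero (Finset.mem_filter.mp hI).2 K hY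
  simp only [Finset.sum_mul, Matrix.trace_sum]
  rw [← Finset.sum_filter_add_sum_filter_not Finset.univ (fun I => i ∈ I), hfar, add_zero]

theorem re_trace_mul_le_of_mem_W1Set (hloc : ∀ I, ∃ K, Hs I = embedOn I K)
    {X : Mat d n} {r : ℝ} (hr : r ∈ W1Set X) :
    ((∑ I, Hs I) * X).trace.re ≤
      2 * (⨆ i, opNorm (∑ I ∈ Finset.univ.filter (fun I => i ∈ I), Hs I)) * r := by
  obtain ⟨Y, hYherm, hYpt, rfl, rfl⟩ := hr
  have hle : ∀ i, opNorm (∑ I ∈ Finset.univ.filter (fun I => i ∈ I), Hs I) ≤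
      ⨆ i, opNorm (∑ I ∈ Finset.univ.filter (fun I => i ∈ I), Hs I) :=
    le_ciSup (Set.finite_range _).bddAbove
  calc ((∑ I, Hs I) * ∑ i, Y i).trace.re
      = ∑ i, ((∑ I ∈ Finset.univ.filter (fun I => i ∈ I), Hs I) * Y i).trace.re := by
        rw [Finset.mul_sum, Matrix.trace_sum, Complex.re_sum]
        simp only [trace_sum_mul_eq_trace_sum_filter_mem hloc (hYpt _)]
    _ ≤ ∑ i, (⨆ i, opNorm (∑ I ∈ Finset.univ.filter (fun I => i ∈ I), Hs I)) *
          traceNorm (Y i) := by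
        refine Finset.sum_le_sum fun i _ => ?_
        exact (re_trace_mul_le_opNorm_mul_traceNorm _ (hYherm i)).trans
          (mul_le_mul_of_nonneg_right (hle i) (traceNorm_nonneg (hYherm i)))
    _ = _ := by rw [← Finset.mul_sum]; ring

end LocalHamiltonian

theorem stmt16_general {d n : ℕ} (hd : 2 ≤ d)
    (Hs : Finset (Fin n) → Mat d n)
    (hloc : ∀ I, ∃ K, Hs I = embedOn I K) :
    lipschitz (∑ I : Finset (Fin n), Hs I) ≤
      2 * ⨆ i : Fin n, opNorm (∑ I ∈ Finset.univ.filter (fun I => i ∈ I), Hs I) := by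
  have : NeZero d := ⟨by omega⟩
  set M := ⨆ i : Fin n, opNorm (∑ I ∈ Finset.univ.filter (fun I => i ∈ I), Hs I)
  have hM : 0 ≤ 2 * M := mul_nonneg zero_le_two (Real.iSup_nonneg fun _ => norm_nonneg _)
  refine Real.sSup_le ?_ hM
  rintro _ ⟨X, hX, htr, hW1, rfl⟩
  have hbound : ((∑ I, Hs I) * X).trace.re ≤ 2 * M * W1 X := by
    rw [W1, ← smul_eq_mul (2 * M), ← Real.sInf_smul_of_nonneg hM]
    refine le_csInf ((W1Set_nonempty hX htr).smul_set) ?_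
    rintro _ ⟨r, hr, rfl⟩
    exact re_trace_mul_le_of_mem_W1Set hloc hr
  exact hbound.trans (mul_le_of_le_one_right hM hW1)

theorem stmt16 {d n : ℕ} (hd : 2 ≤ d) (hn : 1 ≤ n)
    (Hs : Finset (Fin n) → Mat d n) (hherm : ∀ I, (Hs I).IsHermitian)
    (hloc : ∀ I, ∃ K, Hs I = embedOn I K) :
    lipschitz (∑ I : Finset (Fin n), Hs I) ≤
      2 * ⨆ i : Fin n, opNorm (∑ I ∈ Finset.univ.filter (fun I => i ∈ I), Hs I) :=
  stmt16_general hd Hs hloc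

end QW1
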